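/- Let A be a d×d symmetric PSD matrix with σ_r(A) ≥ 15·σ_{r+1}(A), and let f(U) = ‖UU^T − A‖_F² for U ∈ ℝ^{d×r}. Then every U with ∇f(U) = 0 and ∇²f(U) ⪰ 0 satisfies UU^T = P_r(A), the best rank-r approximation of A. -/

import Mathlib

open Matrix BigOperators

noncomputable section

attribute [local instance] Matrix.normedAddCommGroup Matrix.normedSpace

/-- Squared Frobenius norm of a real matrix. -/
def frobSq {m n : Type*} [Fintype m] [Fintype n] (A : Matrix m n ℝ) : ℝ :=
  ∑ i, ∑ j, (A i j) ^ 2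

/-!
In the eigenbasis of `A = P D Pᵀ`, `D = diag μ`, put `V = Pᵀ U`. The gradient condition
`(U Uᵀ - A) U = 0` says that every row `V k` is an eigenvector of `Vᵀ V` with eigenvalue `μ k`
(or zero); the Hessian, tested in the rank-one directions `u wᵀ` with `u ⊥ col U`, says
`(vᵀ D v) ‖w‖² ≤ ‖V w‖² ‖v‖²` whenever `Vᵀ v = 0`.

For `i < r` with `μ i > 0`, the vector `v = μ i eᵢ - V Vᵀ eᵢ` lies in `ker Vᵀ` and is a
`μ i`-eigenvector of `D`. If it were nonzero, `Vᵀ V ⪰ μ i`, so `V` is injective and every row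
`V k` with `μ k < μ i` vanishes. By the gap the remaining rows have index `< r`, so the
`r`-dimensional column space of `V` fills the coordinate subspace of these indices, which contains
`v`; then `v ∈ col V ∩ ker Vᵀ = 0`. Hence `V Vᵀ eᵢ = μ i eᵢ` for `i < r`. If some row `V j` with
`j ≥ r` were nonzero, all these `μ i` would be positive and `V j` would be orthogonal to the `r`
independent rows `V i`, `i < r`, of `ℝʳ`.
-/

section LinearAlgebra

variable {m n : Type*} [Fintype m] [Fintype n]

theorem dotProduct_self_nonneg {R : Type*} [Ring R] [LinearOrder R] [IsStrictOrderedRing R]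
    (v : n → R) : 0 ≤ v ⬝ᵥ v :=
  Finset.sum_nonneg fun i _ => mul_self_nonneg (v i)

theorem mulVec_dotProduct_mulVec (V : Matrix m n ℝ) (x y : n → ℝ) :
    (V *ᵥ x) ⬝ᵥ (V *ᵥ y) = x ⬝ᵥ (Vᵀ * V) *ᵥ y := by
  rw [← vecMul_transpose, ← dotProduct_mulVec, mulVec_mulVec]

def supportedOn (s : Finset m) : Submodule ℝ (m → ℝ) where
  carrier := {x | ∀ k ∉ s, x k = 0}
  add_mem' hx hy k hk := by simp [hx k hk, hy k hk]
  zero_mem' _ _ := rfl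
  smul_mem' c _ hx k hk := by simp [hx k hk]

theorem finrank_supportedOn_le (s : Finset m) : Module.finrank ℝ (supportedOn s) ≤ s.card := by
  let ρ : supportedOn s →ₗ[ℝ] (s → ℝ) :=
    (LinearMap.funLeft ℝ ℝ ((↑) : s → m)).comp (supportedOn s).subtype
  have hρ : Function.Injective ρ := by
    rw [← LinearMap.ker_eq_bot, LinearMap.ker_eq_bot']
    rintro ⟨x, hx⟩ hρx
    ext k
    by_cases hk : k ∈ s
    · exact congrFun hρx ⟨k, hk⟩
    · exact hx k hk
  simpa using LinearMap.finrank_le_finrank_of_injective hρ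

/-- The column space of `V` is then all of `supportedOn s`. -/
theorem eq_zero_of_transpose_mulVec_eq_zero_of_supportedOn {V : Matrix m n ℝ} {s : Finset m}
    (hV : ∀ k ∉ s, V k = 0) (hinj : Function.Injective V.mulVecLin)
    (hs : s.card ≤ Fintype.card n) {v : m → ℝ} (hvs : v ∈ supportedOn s) (hv : Vᵀ *ᵥ v = 0) :
    v = 0 := by
  have hrange : LinearMap.range V.mulVecLin ≤ supportedOn s := by
    rintro _ ⟨w, rfl⟩ k hk
    simp [mulVec, hV k hk]
  have hdim : Module.finrank ℝ (supportedOn s) ≤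
      Module.finrank ℝ (LinearMap.range V.mulVecLin) := by
    rw [LinearMap.finrank_range_of_inj hinj, Module.finrank_fintype_fun_eq_card]
    exact (finrank_supportedOn_le s).trans hs
  obtain ⟨w, rfl⟩ := (Submodule.eq_of_le_of_finrank_le hrange hdim).ge hvs
  rw [mulVecLin_apply] at hv ⊢
  rw [← dotProduct_self_eq_zero, dotProduct_comm, dotProduct_mulVec, ← mulVec_transpose, hv,
    zero_dotProduct]

end LinearAlgebra

section Frobenius

variable {m n : Type*} [Fintype m] [Fintype n]

def frobInner (X Y : Matrix m n ℝ) : ℝ :=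
  ∑ i, ∑ j, X i j * Y i j

theorem frobSq_eq_frobInner_self (X : Matrix m n ℝ) : frobSq X = frobInner X X := by
  simp only [frobSq, frobInner, sq]

theorem frobInner_eq_trace (X Y : Matrix m n ℝ) : frobInner X Y = trace (Xᵀ * Y) := by
  simp only [frobInner, trace, diag, mul_apply, transpose_apply]
  exact Finset.sum_comm

theorem frobInner_self_eq_zero_iff {X : Matrix m n ℝ} : frobInner X X = 0 ↔ X = 0 := by
  rw [frobInner_eq_trace, ← conjTranspose_eq_transpose_of_trivial,
    trace_conjTranspose_mul_self_eq_zero_iff]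

theorem frobInner_add_left (X Y Z : Matrix m n ℝ) :
    frobInner (X + Y) Z = frobInner X Z + frobInner Y Z := by
  simp only [frobInner, Matrix.add_apply, add_mul, Finset.sum_add_distrib]

theorem frobInner_add_right (X Y Z : Matrix m n ℝ) :
    frobInner X (Y + Z) = frobInner X Y + frobInner X Z := by
  simp only [frobInner, Matrix.add_apply, mul_add, Finset.sum_add_distrib]

theorem frobInner_vecMulVec_vecMulVec (a c : m → ℝ) (b e : n → ℝ) :
    frobInner (vecMulVec a b) (vecMulVec c e) = (a ⬝ᵥ c) * (b ⬝ᵥ e) := by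
  simp only [frobInner, vecMulVec_apply, dotProduct, Finset.sum_mul_sum]
  exact Finset.sum_congr rfl fun i _ => Finset.sum_congr rfl fun j _ => by ring

theorem frobInner_vecMulVec_right (X : Matrix m n ℝ) (a : m → ℝ) (b : n → ℝ) :
    frobInner X (vecMulVec a b) = a ⬝ᵥ X *ᵥ b := by
  simp only [frobInner, vecMulVec_apply, dotProduct, mulVec, Finset.mul_sum]
  exact Finset.sum_congr rfl fun i _ => Finset.sum_congr rfl fun j _ => by ring

theorem frobInner_mul_transpose_add {M : Matrix m m ℝ} (hM : Mᵀ = M) (U Z : Matrix m n ℝ) :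
    frobInner M (U * Zᵀ + Z * Uᵀ) = 2 * frobInner (M * U) Z := by
  have h₂ : trace (M * (Z * Uᵀ)) = trace (Uᵀ * (M * Z)) := by
    rw [← Matrix.mul_assoc, trace_mul_comm]
  have h₁ : trace (M * (U * Zᵀ)) = trace (Uᵀ * (M * Z)) := by
    rw [← trace_transpose, transpose_mul, transpose_mul, transpose_transpose, hM, trace_mul_comm,
      h₂]
  rw [frobInner_eq_trace, frobInner_eq_trace, hM, Matrix.mul_add, trace_add, h₁, h₂,
    transpose_mul, hM, Matrix.mul_assoc, two_mul]

theorem frobSq_add_smul_add_smul (M B C : Matrix m n ℝ) (t : ℝ) :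
    frobSq (M + t • B + t ^ 2 • C) = frobSq M + 2 * frobInner M B * t +
      (frobSq B + 2 * frobInner M C) * t ^ 2 + 2 * frobInner B C * t ^ 3 + frobSq C * t ^ 4 := by
  simp only [frobSq, frobInner, Matrix.add_apply, Matrix.smul_apply, smul_eq_mul, Finset.mul_sum,
    Finset.sum_mul, ← Finset.sum_add_distrib]
  exact Finset.sum_congr rfl fun i _ => Finset.sum_congr rfl fun j _ => by ring

end Frobenius

section Calculus

theorem iteratedFDeriv_two_apply_same {E F : Type*} [NormedAddCommGroup E] [NormedSpace ℝ E]
    [NormedAddCommGroup F] [NormedSpace ℝ F] {f : E → F} (hf : ContDiff ℝ 2 f) (x v : E) :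
    iteratedFDeriv ℝ 2 f x ![v, v] = deriv (deriv fun t : ℝ => f (x + t • v)) 0 := by
  have hshift : ContDiff ℝ 2 fun z => f (x + z) := hf.comp (by fun_prop)
  have hline : (fun t : ℝ => f (x + t • v)) =
      (fun z => f (x + z)) ∘ ContinuousLinearMap.toSpanSingleton ℝ v := rfl
  rw [show deriv (deriv fun t : ℝ => f (x + t • v)) = iteratedDeriv 2 (fun t : ℝ => f (x + t • v))
      by rw [iteratedDeriv_succ, iteratedDeriv_one], iteratedDeriv_eq_iteratedFDeriv, hline,
    ContinuousLinearMap.iteratedFDeriv_comp_right _ hshift 0 le_rfl,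
    iteratedFDeriv_comp_add_left]
  simp only [map_zero, add_zero, ContinuousMultilinearMap.compContinuousLinearMap_apply,
    ContinuousLinearMap.toSpanSingleton_apply, one_smul]
  congr 1
  ext i
  fin_cases i <;> rfl

theorem hasDerivAt_quartic (a b c e h t : ℝ) :
    HasDerivAt (fun t : ℝ => a + b * t + c * t ^ 2 + e * t ^ 3 + h * t ^ 4)
      (b + 2 * c * t + 3 * e * t ^ 2 + 4 * h * t ^ 3) t :=
  (((((hasDerivAt_id' t).const_mul b).const_add a).add
    ((hasDerivAt_pow 2 t).const_mul c)).add ((hasDerivAt_pow 3 t).const_mul e)).add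
    ((hasDerivAt_pow 4 t).const_mul h) |>.congr_deriv (by norm_num; ring)

theorem deriv_deriv_quartic (a b c e h : ℝ) :
    deriv (deriv fun t : ℝ => a + b * t + c * t ^ 2 + e * t ^ 3 + h * t ^ 4) 0 = 2 * c := by
  rw [funext fun t => (hasDerivAt_quartic a b c e h t).deriv]
  simpa using (hasDerivAt_quartic b (2 * c) (3 * e) (4 * h) 0 0).deriv

end Calculus

section Landscape

variable {m n : Type*} [Fintype m] [Fintype n]

/-- The Hessian condition of `U ↦ ‖U Uᵀ - A‖²_F` in the rank-one directions `u wᵀ` with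
`u ⊥ col U`. -/
def SecondOrderRankOne (A : Matrix m m ℝ) (U : Matrix m n ℝ) : Prop :=
  ∀ (u : m → ℝ) (w : n → ℝ), Uᵀ *ᵥ u = 0 →
    (u ⬝ᵥ A *ᵥ u) * (w ⬝ᵥ w) ≤ ((U *ᵥ w) ⬝ᵥ (U *ᵥ w)) * (u ⬝ᵥ u)

variable (A : Matrix m m ℝ)

theorem contDiff_frobSq_mul_transpose_sub :
    ContDiff ℝ 2 fun U : Matrix m n ℝ => frobSq (U * Uᵀ - A) := by
  unfold frobSq
  simp only [Matrix.sub_apply, mul_apply, transpose_apply]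
  fun_prop

theorem frobSq_add_smul_mul_transpose_sub (U Z : Matrix m n ℝ) (t : ℝ) :
    frobSq ((U + t • Z) * (U + t • Z)ᵀ - A) =
      frobSq (U * Uᵀ - A) + 2 * frobInner (U * Uᵀ - A) (U * Zᵀ + Z * Uᵀ) * t +
        (frobSq (U * Zᵀ + Z * Uᵀ) + 2 * frobInner (U * Uᵀ - A) (Z * Zᵀ)) * t ^ 2 +
        2 * frobInner (U * Zᵀ + Z * Uᵀ) (Z * Zᵀ) * t ^ 3 + frobSq (Z * Zᵀ) * t ^ 4 := by
  rw [← frobSq_add_smul_add_smul]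
  congr 1
  simp only [transpose_add, transpose_smul, Matrix.add_mul, Matrix.mul_add, Matrix.smul_mul,
    Matrix.mul_smul, smul_add, smul_smul]
  module

variable {A}

theorem mul_eq_zero_of_fderiv_eq_zero (hA : Aᵀ = A) {U : Matrix m n ℝ}
    (h : fderiv ℝ (fun U : Matrix m n ℝ => frobSq (U * Uᵀ - A)) U = 0) :
    (U * Uᵀ - A) * U = 0 := by
  set G := (U * Uᵀ - A) * U
  have hline : HasDerivAt (fun t : ℝ => frobSq ((U + t • G) * (U + t • G)ᵀ - A))
      (fderiv ℝ (fun U : Matrix m n ℝ => frobSq (U * Uᵀ - A)) U G) 0 :=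
    ((contDiff_frobSq_mul_transpose_sub A).differentiable (by norm_num) U).hasFDerivAt
      |>.hasLineDerivAt G
  simp only [frobSq_add_smul_mul_transpose_sub, h, _root_.zero_apply] at hline
  have hG := (hasDerivAt_quartic _ _ _ _ _ 0).unique hline
  rw [frobInner_mul_transpose_add (by simp [hA])] at hG
  exact frobInner_self_eq_zero_iff.1 (by linarith)

theorem secondOrderRankOne_of_iteratedFDeriv_nonneg {U : Matrix m n ℝ}
    (h : ∀ Z, 0 ≤ iteratedFDeriv ℝ 2 (fun U : Matrix m n ℝ => frobSq (U * Uᵀ - A)) U ![Z, Z]) :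
    SecondOrderRankOne A U := by
  intro u w hu
  have hZ := h (vecMulVec u w)
  rw [iteratedFDeriv_two_apply_same (contDiff_frobSq_mul_transpose_sub A)] at hZ
  simp only [frobSq_add_smul_mul_transpose_sub, deriv_deriv_quartic] at hZ
  have hxu : (U *ᵥ w) ⬝ᵥ u = 0 := by
    rw [dotProduct_comm, dotProduct_mulVec, ← mulVec_transpose, hu, zero_dotProduct]
  have hMu : u ⬝ᵥ (U * Uᵀ - A) *ᵥ u = -(u ⬝ᵥ A *ᵥ u) := by
    rw [sub_mulVec, ← mulVec_mulVec, hu, mulVec_zero, dotProduct_sub, dotProduct_zero, zero_sub]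
  rw [transpose_vecMulVec, mul_vecMulVec, vecMulVec_mul, vecMul_transpose,
    vecMulVec_mul_vecMulVec, frobSq_eq_frobInner_self, frobInner_add_left, frobInner_add_right,
    frobInner_add_right, frobInner_vecMulVec_vecMulVec, frobInner_vecMulVec_vecMulVec,
    frobInner_vecMulVec_vecMulVec, frobInner_vecMulVec_vecMulVec, frobInner_vecMulVec_right,
    mulVec_smul, dotProduct_smul, smul_eq_mul, hMu, dotProduct_comm u (U *ᵥ w), hxu] at hZ
  linarith

theorem conj_mul_transpose_sub_mul [DecidableEq m] {P : Matrix m m ℝ} (hP : P * Pᵀ = 1)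
    (U : Matrix m n ℝ) :
    ((Pᵀ * U) * (Pᵀ * U)ᵀ - Pᵀ * A * P) * (Pᵀ * U) = Pᵀ * ((U * Uᵀ - A) * U) := by
  rw [transpose_mul, transpose_transpose, Matrix.sub_mul, Matrix.sub_mul, Matrix.mul_sub]
  simp only [Matrix.mul_assoc]
  rw [← Matrix.mul_assoc P Pᵀ U, hP, Matrix.one_mul]

theorem SecondOrderRankOne.conj [DecidableEq m] {U : Matrix m n ℝ} (h : SecondOrderRankOne A U)
    {P : Matrix m m ℝ} (hP : P ∈ orthogonalGroup m ℝ) :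
    SecondOrderRankOne (Pᵀ * A * P) (Pᵀ * U) := by
  have hPtP := (mem_orthogonalGroup_iff' m ℝ).1 hP
  have hPPt := (mem_orthogonalGroup_iff m ℝ).1 hP
  intro v w hv
  rw [transpose_mul, transpose_transpose, ← mulVec_mulVec] at hv
  have hv' : (P *ᵥ v) ⬝ᵥ (P *ᵥ v) = v ⬝ᵥ v := by
    rw [mulVec_dotProduct_mulVec, hPtP, one_mulVec]
  have hw : ((Pᵀ * U) *ᵥ w) ⬝ᵥ ((Pᵀ * U) *ᵥ w) = (U *ᵥ w) ⬝ᵥ (U *ᵥ w) := by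
    rw [← mulVec_mulVec, mulVec_dotProduct_mulVec, transpose_transpose, hPPt, one_mulVec]
  have hquad : (P *ᵥ v) ⬝ᵥ A *ᵥ (P *ᵥ v) = v ⬝ᵥ (Pᵀ * A * P) *ᵥ v := by
    rw [mulVec_mulVec, ← vecMul_transpose P v, ← dotProduct_mulVec, mulVec_mulVec,
      Matrix.mul_assoc]
  rw [← hv', hw, ← hquad]
  exact h _ w hv

end Landscape

section Eigenbasis

variable {m n : Type*} [Fintype m] [Fintype n] {μ : m → ℝ} {V : Matrix m n ℝ}

theorem transpose_mul_self_mulVec_row [DecidableEq m] (h : (V * Vᵀ - diagonal μ) * V = 0)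
    (k : m) : (Vᵀ * V) *ᵥ V k = μ k • V k := by
  ext j
  have hkj := congrFun (congrFun h k) j
  rw [Matrix.sub_mul, Matrix.sub_apply, Matrix.zero_apply, diagonal_mul, sub_eq_zero] at hkj
  rw [Pi.smul_apply, smul_eq_mul, ← hkj]
  simp only [mulVec, dotProduct, mul_apply, transpose_apply, Finset.sum_mul]
  rw [Finset.sum_comm]
  exact Finset.sum_congr rfl fun l _ => Finset.sum_congr rfl fun p _ => by ring

theorem mulVec_row_dotProduct_self (hrow : ∀ k, (Vᵀ * V) *ᵥ V k = μ k • V k) (k : m) :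
    (V *ᵥ V k) ⬝ᵥ (V *ᵥ V k) = μ k * (V k ⬝ᵥ V k) := by
  rw [mulVec_dotProduct_mulVec, hrow, dotProduct_smul, smul_eq_mul]

theorem mul_row_dotProduct_row_comm (hrow : ∀ k, (Vᵀ * V) *ᵥ V k = μ k • V k) (k l : m) :
    μ k * (V k ⬝ᵥ V l) = μ l * (V k ⬝ᵥ V l) := by
  have h := mulVec_dotProduct_mulVec V (V k) (V l)
  rw [dotProduct_comm, mulVec_dotProduct_mulVec, hrow, hrow, dotProduct_smul, dotProduct_smul,
    smul_eq_mul, smul_eq_mul, dotProduct_comm (V l)] at h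
  linarith

theorem row_eq_zero_of_lt (hrow : ∀ k, (Vᵀ * V) *ᵥ V k = μ k • V k) {c : ℝ}
    (hexp : ∀ w, c * (w ⬝ᵥ w) ≤ (V *ᵥ w) ⬝ᵥ (V *ᵥ w)) {k : m} (hk : μ k < c) : V k = 0 := by
  have h := hexp (V k)
  rw [mulVec_row_dotProduct_self hrow] at h
  exact dotProduct_self_eq_zero.1 (by nlinarith [dotProduct_self_nonneg (V k)])

theorem pos_of_row_ne_zero (hrow : ∀ k, (Vᵀ * V) *ᵥ V k = μ k • V k) {k : m} (hk : V k ≠ 0) :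
    0 < μ k := by
  have hkk : 0 < V k ⬝ᵥ V k :=
    (dotProduct_self_nonneg _).lt_of_ne' (mt dotProduct_self_eq_zero.1 hk)
  have hsq : (V k ⬝ᵥ V k) * (V k ⬝ᵥ V k) ≤ (V *ᵥ V k) ⬝ᵥ (V *ᵥ V k) :=
    Finset.single_le_sum (f := fun l => (V *ᵥ V k) l * (V *ᵥ V k) l)
      (fun l _ => mul_self_nonneg _) (Finset.mem_univ k)
  rw [mulVec_row_dotProduct_self hrow] at hsq
  nlinarith

theorem injective_mulVecLin_of_le {c : ℝ} (hc : 0 < c)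
    (hexp : ∀ w, c * (w ⬝ᵥ w) ≤ (V *ᵥ w) ⬝ᵥ (V *ᵥ w)) : Function.Injective V.mulVecLin := by
  rw [← LinearMap.ker_eq_bot, LinearMap.ker_eq_bot']
  intro w hw
  have h := hexp w
  rw [← mulVecLin_apply, hw, dotProduct_zero] at h
  have := dotProduct_self_nonneg w
  exact dotProduct_self_eq_zero.1 (by nlinarith)

variable [DecidableEq m]

theorem transpose_mulVec_single_sub_mulVec_row (hrow : ∀ k, (Vᵀ * V) *ᵥ V k = μ k • V k) (i : m) :
    Vᵀ *ᵥ (Pi.single i (μ i) - V *ᵥ V i) = 0 := by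
  rw [mulVec_sub, mulVec_transpose, single_vecMul, mulVec_mulVec, hrow]
  exact sub_self _

theorem diagonal_mulVec_single_sub_mulVec_row (hrow : ∀ k, (Vᵀ * V) *ᵥ V k = μ k • V k) (i : m) :
    diagonal μ *ᵥ (Pi.single i (μ i) - V *ᵥ V i) = μ i • (Pi.single i (μ i) - V *ᵥ V i) := by
  ext k
  rcases eq_or_ne k i with rfl | hk
  · simp [mulVec_diagonal]
  · simp only [mulVec_diagonal, Pi.sub_apply, Pi.smul_apply, smul_eq_mul, Pi.single_eq_of_ne hk]
    change μ k * (0 - V k ⬝ᵥ V i) = μ i * (0 - V k ⬝ᵥ V i)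
    linear_combination -mul_row_dotProduct_row_comm hrow k i

end Eigenbasis

section TopEigenspace

variable {d r : ℕ} {μ : Fin d → ℝ} {V : Matrix (Fin d) (Fin r) ℝ}

theorem mulVec_row_eq_single (hμ0 : ∀ i, 0 ≤ μ i)
    (hgap : ∀ i j : Fin d, (i : ℕ) < r → r ≤ (j : ℕ) → 0 < μ j → μ j < μ i)
    (hrow : ∀ k, (Vᵀ * V) *ᵥ V k = μ k • V k) (hsecond : SecondOrderRankOne (diagonal μ) V)
    {i : Fin d} (hi : (i : ℕ) < r) : V *ᵥ V i = Pi.single i (μ i) := by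
  rcases (hμ0 i).eq_or_lt with h0 | hpos
  · rw [← h0, Pi.single_zero, ← dotProduct_self_eq_zero, mulVec_row_dotProduct_self hrow, ← h0,
      zero_mul]
  set v : Fin d → ℝ := Pi.single i (μ i) - V *ᵥ V i with hv
  suffices hv0 : v = 0 from (sub_eq_zero.1 hv0).symm
  by_contra hv0
  have hVv : Vᵀ *ᵥ v = 0 := transpose_mulVec_single_sub_mulVec_row hrow i
  have hvv : 0 < v ⬝ᵥ v := (dotProduct_self_nonneg v).lt_of_ne' (mt dotProduct_self_eq_zero.1 hv0)
  have hexp : ∀ w, μ i * (w ⬝ᵥ w) ≤ (V *ᵥ w) ⬝ᵥ (V *ᵥ w) := fun w => by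
    have h := hsecond v w hVv
    rw [diagonal_mulVec_single_sub_mulVec_row hrow, dotProduct_smul, smul_eq_mul] at h
    nlinarith
  let s := Finset.univ.filter fun k => μ i ≤ μ k
  have hrows : ∀ k ∉ s, V k = 0 := fun k hk =>
    row_eq_zero_of_lt hrow hexp (by simpa [s] using hk)
  refine hv0 (eq_zero_of_transpose_mulVec_eq_zero_of_supportedOn hrows
    (injective_mulVecLin_of_le hpos hexp) ?_ ?_ hVv)
  · have hs : s ⊆ Finset.univ.filter fun k : Fin d => (k : ℕ) < r := fun k hk => by
      have hik : μ i ≤ μ k := (Finset.mem_filter.1 hk).2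
      simp only [Finset.mem_filter, Finset.mem_univ, true_and]
      by_contra hkr
      linarith [hgap i k hi (not_lt.1 hkr) (hpos.trans_le hik)]
    calc s.card ≤ min d r := (Finset.card_le_card hs).trans_eq Fin.card_filter_val_lt
      _ ≤ Fintype.card (Fin r) := by simp
  · intro k hk
    have hki : k ≠ i := by rintro rfl; simp [s] at hk
    simp only [hv, Pi.sub_apply, Pi.single_eq_of_ne hki]
    change 0 - V k ⬝ᵥ V i = 0
    rw [hrows k hk, zero_dotProduct, sub_zero]

theorem row_eq_zero_of_le (hμ0 : ∀ i, 0 ≤ μ i)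
    (hgap : ∀ i j : Fin d, (i : ℕ) < r → r ≤ (j : ℕ) → 0 < μ j → μ j < μ i)
    (hrow : ∀ k, (Vᵀ * V) *ᵥ V k = μ k • V k) (hsecond : SecondOrderRankOne (diagonal μ) V)
    {j : Fin d} (hj : r ≤ (j : ℕ)) : V j = 0 := by
  by_contra hVj
  have hμj := pos_of_row_ne_zero hrow hVj
  let e := Fin.castLE (hj.trans j.isLt.le)
  have hcol (k : Fin d) (a : Fin r) :
      V k ⬝ᵥ V (e a) = (Pi.single (e a) (μ (e a)) : Fin d → ℝ) k :=
    congrFun (mulVec_row_eq_single (i := e a) hμ0 hgap hrow hsecond a.isLt) k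
  let W : Matrix (Fin r) (Fin r) ℝ := V.submatrix e id
  have hWW : W * Wᵀ = diagonal fun a => μ (e a) := by
    ext a b
    refine (hcol (e a) b).trans ?_
    rcases eq_or_ne a b with rfl | hab
    · simp
    · rw [diagonal_apply_ne _ hab]
      exact Pi.single_eq_of_ne ((Fin.castLE_injective _).ne hab) _
  have hdet : W.det ≠ 0 := by
    have h := congrArg det hWW
    rw [det_mul, det_transpose, det_diagonal] at h
    have : 0 < W.det * W.det :=
      h ▸ Finset.prod_pos fun a _ => hμj.trans (hgap _ _ a.isLt hj hμj)
    exact fun h0 => by simp [h0] at this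
  refine hVj (eq_zero_of_mulVec_eq_zero hdet (funext fun a => ?_))
  have hja : j ≠ e a := fun h => by
    have := congrArg Fin.val h
    simp only [e, Fin.val_castLE] at this
    omega
  exact (dotProduct_comm _ _).trans ((hcol j a).trans (Pi.single_eq_of_ne hja _))

theorem mul_transpose_eq_diagonal_of_critical (hμ0 : ∀ i, 0 ≤ μ i)
    (hgap : ∀ i j : Fin d, (i : ℕ) < r → r ≤ (j : ℕ) → 0 < μ j → μ j < μ i)
    (hfirst : (V * Vᵀ - diagonal μ) * V = 0) (hsecond : SecondOrderRankOne (diagonal μ) V) :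
    V * Vᵀ = diagonal fun i : Fin d => if (i : ℕ) < r then μ i else 0 := by
  have hrow := transpose_mul_self_mulVec_row hfirst
  ext k l
  change V k ⬝ᵥ V l = _
  by_cases hl : (l : ℕ) < r
  · rw [show V k ⬝ᵥ V l = _ from congrFun (mulVec_row_eq_single hμ0 hgap hrow hsecond hl) k]
    rcases eq_or_ne k l with rfl | hkl <;> simp [*]
  · rw [row_eq_zero_of_le hμ0 hgap hrow hsecond (not_lt.1 hl), dotProduct_zero]
    rcases eq_or_ne k l with rfl | hkl <;> simp [*]

end TopEigenspace

theorem stmt19_general {d r : ℕ}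
    (A : Matrix (Fin d) (Fin d) ℝ)
    (P : Matrix (Fin d) (Fin d) ℝ) (hP : P ∈ Matrix.orthogonalGroup (Fin d) ℝ)
    (μ : Fin d → ℝ) (hμ0 : ∀ i, 0 ≤ μ i)
    (hdecomp : A = P * Matrix.diagonal μ * Pᵀ)
    (hgap : ∀ i j : Fin d, (i : ℕ) < r → r ≤ (j : ℕ) → 15 * μ j ≤ μ i)
    (f : Matrix (Fin d) (Fin r) ℝ → ℝ)
    (hf : f = fun U => frobSq (U * Uᵀ - A))
    (U : Matrix (Fin d) (Fin r) ℝ)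
    (hgrad : fderiv ℝ f U = 0)
    (hhess : ∀ Z : Matrix (Fin d) (Fin r) ℝ, 0 ≤ iteratedFDeriv ℝ 2 f U ![Z, Z]) :
    U * Uᵀ = P * Matrix.diagonal (fun i : Fin d => if (i : ℕ) < r then μ i else 0) * Pᵀ := by
  subst hf
  have hPtP := (mem_orthogonalGroup_iff' (Fin d) ℝ).1 hP
  have hPPt := (mem_orthogonalGroup_iff (Fin d) ℝ).1 hP
  have hAT : Aᵀ = A := by
    rw [hdecomp, transpose_mul, transpose_mul, transpose_transpose, diagonal_transpose,
      Matrix.mul_assoc]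
  have hD : Pᵀ * A * P = diagonal μ := by
    rw [hdecomp, ← Matrix.mul_assoc, ← Matrix.mul_assoc, hPtP, Matrix.one_mul, Matrix.mul_assoc,
      hPtP, Matrix.mul_one]
  have hV := mul_transpose_eq_diagonal_of_critical (V := Pᵀ * U) hμ0
    (fun i j hi hj hμj => by linarith [hgap i j hi hj])
    (by rw [← hD, conj_mul_transpose_sub_mul hPPt, mul_eq_zero_of_fderiv_eq_zero hAT hgrad,
      Matrix.mul_zero])
    (hD ▸ (secondOrderRankOne_of_iteratedFDeriv_nonneg hhess).conj hP)
  rw [← hV, transpose_mul, transpose_transpose]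
  simp only [← Matrix.mul_assoc, hPPt, Matrix.one_mul]
  rw [Matrix.mul_assoc _ P, hPPt, Matrix.mul_one]

/-- Matrix factorization landscape lemma: let `A = P diag(μ) Pᵀ` be a PSD matrix with
eigenvalues sorted decreasingly and `σ_r(A) ≥ 15 σ_{r+1}(A)`, and let
`f(U) = ‖UUᵀ − A‖_F²`. Then every `U` with `∇f(U) = 0` and `∇²f(U) ⪰ 0` satisfies
`UUᵀ = P_r(A)`, the best rank-`r` approximation of `A`. -/
theorem stmt19 {d r : ℕ}
    (A : Matrix (Fin d) (Fin d) ℝ) (hA : A.PosSemidef)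
    (P : Matrix (Fin d) (Fin d) ℝ) (hP : P ∈ Matrix.orthogonalGroup (Fin d) ℝ)
    (μ : Fin d → ℝ) (hμ0 : ∀ i, 0 ≤ μ i)
    (hsorted : ∀ i j : Fin d, i ≤ j → μ j ≤ μ i)
    (hdecomp : A = P * Matrix.diagonal μ * Pᵀ)
    (hgap : ∀ i j : Fin d, (i : ℕ) < r → r ≤ (j : ℕ) → 15 * μ j ≤ μ i)
    (f : Matrix (Fin d) (Fin r) ℝ → ℝ)
    (hf : f = fun U => frobSq (U * Uᵀ - A))
    (U : Matrix (Fin d) (Fin r) ℝ)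
    (hgrad : fderiv ℝ f U = 0)
    (hhess : ∀ Z : Matrix (Fin d) (Fin r) ℝ, 0 ≤ iteratedFDeriv ℝ 2 f U ![Z, Z]) :
    U * Uᵀ = P * Matrix.diagonal (fun i : Fin d => if (i : ℕ) < r then μ i else 0) * Pᵀ :=
  stmt19_general A P hP μ hμ0 hdecomp hgap f hf U hgrad hhess
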